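/- arXiv:1703.08900 — 3 statements merged into one kernel-verified Lean document; each statement's English description precedes it below -/
import Mathlib

section
/- Let F ≥ 2 and S ≥ 1 be integers and let d = gcd(F,S). Then a (K, F, F−2, S)-PDA exists with K = ((F−1)·(S−1) + d − 1)/2; i.e., K_{(F,2,S)} ≥ (F−1)(S−1)/2 + (d−1)/2. -/
/-- A `(K, F, Z, S)` placement delivery array: an `F × K` array over
`{0, …, S-1} ∪ {*}` (with `none` playing the role of `*`) such that
(1) each integer occurs at most once in each row and in each column,
(2) whenever two distinct cells `(a, b)` and `(c, d)` contain the same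
integer, the opposite corners `(a, d)` and `(c, b)` contain `*`, and
(3) the symbol `*` occurs exactly `Z` times in each column. -/
def IsPDA (K F Z S : ℕ) (P : Fin F → Fin K → Option (Fin S)) : Prop :=
  (∀ (i : Fin F) (j j' : Fin K) (s : Fin S), P i j = some s → P i j' = some s → j = j') ∧
  (∀ (i i' : Fin F) (j : Fin K) (s : Fin S), P i j = some s → P i' j = some s → i = i') ∧
  (∀ (a c : Fin F) (b d : Fin K) (s : Fin S),
      (a, b) ≠ (c, d) → P a b = some s → P c d = some s →
      P a d = none ∧ P c b = none) ∧
  (∀ j : Fin K, (Finset.univ.filter (fun i => P i j = none)).card = Z)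

/-- There exists a `(K, F, Z, S)` placement delivery array. -/
def PDAExists (K F Z S : ℕ) : Prop :=
  ∃ P : Fin F → Fin K → Option (Fin S), IsPDA K F Z S P

/-!
With `Z = F - 2` every column holds exactly two symbols, so the array is a list of columns
`((b, s), (a, t))`: row `b` holds `s` and row `a` holds `t`. If no cell occurs in two columns and
every row `x` carries a set `σ x` of symbols centred at it with `s ∈ σ a \ σ b` and
`t ∈ σ b \ σ a` for each column, then all PDA conditions hold.

Write `F = q * S + r`. In each block of `S` consecutive rows (`q` full ones and a partial one of
`r` rows) and for each pair of symbols `u < s`, the column with `s` in the `u`-th row of the block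
and `u` in its `s`-th row works, row `x` being centred at `x % S`. These are
`(q * S * (S - 1) + r * (r - 1)) / 2` columns. The cells they leave free on the last `r` rows and
the last `S - r` symbols form a copy of the problem for `r` rows and `S - r` symbols; recursing
along the Euclidean algorithm adds `((r - 1) * (S - r - 1) + gcd r S - 1) / 2` columns, which sums
to the bound.
-/

namespace PDA

abbrev Cell := ℕ × ℕ

abbrev Column := Cell × Cell

def CellDisjoint (p q : Column) : Prop :=
  p.1 ≠ q.1 ∧ p.1 ≠ q.2 ∧ p.2 ≠ q.1 ∧ p.2 ≠ q.2

theorem CellDisjoint.symm {p q : Column} (h : CellDisjoint p q) : CellDisjoint q p :=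
  ⟨h.1.symm, h.2.2.1.symm, h.2.1.symm, h.2.2.2.symm⟩

def InBounds (F S : ℕ) (p : Column) : Prop :=
  p.1.1 < F ∧ p.2.1 < F ∧ p.1.2 < S ∧ p.2.2 < S

structure IsCrossing (σ : ℕ → Finset ℕ) (p : Column) : Prop where
  fst_mem : p.1.2 ∈ σ p.2.1
  fst_notMem : p.1.2 ∉ σ p.1.1
  snd_mem : p.2.2 ∈ σ p.1.1
  snd_notMem : p.2.2 ∉ σ p.2.1

namespace IsCrossing

variable {σ : ℕ → Finset ℕ} {p q : Column}

theorem row_ne (hp : IsCrossing σ p) : p.1.1 ≠ p.2.1 :=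
  fun h => hp.fst_notMem (h ▸ hp.fst_mem)

theorem symbol_ne (hp : IsCrossing σ p) : p.1.2 ≠ p.2.2 :=
  fun h => hp.fst_notMem (h ▸ hp.snd_mem)

theorem symbol_notMem {x y : ℕ} (hp : IsCrossing σ p) (hc : (x, y) = p.1 ∨ (x, y) = p.2) :
    y ∉ σ x := by
  obtain ⟨⟨b, s⟩, ⟨a, t⟩⟩ := p
  rcases hc with hc | hc <;> obtain ⟨rfl, rfl⟩ := Prod.mk.inj hc
  exacts [hp.fst_notMem, hp.snd_notMem]

/-- Each symbol of `q` is centred at the other row of `q`, while `y` is not centred at `x`. -/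
theorem row_ne_of_symbol_eq (hp : IsCrossing σ p) (hq : IsCrossing σ q)
    (hpq : CellDisjoint p q) {x y z : ℕ} (hx : (x, y) = p.1 ∨ (x, y) = p.2)
    (hz : (z, y) = q.1 ∨ (z, y) = q.2) : x ≠ q.1.1 ∧ x ≠ q.2.1 := by
  have hy := hp.symbol_notMem hx
  obtain ⟨h11, h12, h21, h22⟩ := hpq
  obtain ⟨⟨b, s⟩, ⟨a, t⟩⟩ := q
  simp only [Prod.mk.injEq] at hz hq ⊢
  constructor <;> rintro rfl
  · rcases hz with ⟨-, rfl⟩ | ⟨-, rfl⟩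
    · rcases hx with hx | hx
      exacts [h11 hx.symm, h21 hx.symm]
    · exact hy hq.snd_mem
  · rcases hz with ⟨-, rfl⟩ | ⟨-, rfl⟩
    · exact hy hq.fst_mem
    · rcases hx with hx | hx
      exacts [h12 hx.symm, h22 hx.symm]

end IsCrossing

def entry (F S : ℕ) (p : Column) (i : Fin F) : Option (Fin S) :=
  if h : i.val = p.1.1 ∧ p.1.2 < S then some ⟨p.1.2, h.2⟩
  else if h' : i.val = p.2.1 ∧ p.2.2 < S then some ⟨p.2.2, h'.2⟩ else none

theorem entry_eq_some_iff {F S : ℕ} {p : Column} (hp : p.1.1 ≠ p.2.1) (i : Fin F) (s : Fin S) :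
    entry F S p i = some s ↔ (i.val, s.val) = p.1 ∨ (i.val, s.val) = p.2 := by
  unfold entry
  split_ifs with h1 h2 <;> simp only [Option.some.injEq, Fin.ext_iff, Prod.ext_iff,
    false_iff, not_or, not_and] <;> omega

theorem entry_eq_none_iff {F S : ℕ} {p : Column} (h1 : p.1.2 < S) (h2 : p.2.2 < S) (i : Fin F) :
    entry F S p i = none ↔ i.val ≠ p.1.1 ∧ i.val ≠ p.2.1 := by
  unfold entry
  split_ifs <;> simp only [false_iff, true_iff, not_and_or, not_not] <;> omega

theorem card_entry_eq_none {F S : ℕ} {p : Column} (hb : InBounds F S p) (hp : p.1.1 ≠ p.2.1) :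
    (Finset.univ.filter fun i : Fin F => entry F S p i = none).card = F - 2 := by
  obtain ⟨h1, h2, h3, h4⟩ := hb
  have hrows : Finset.univ.filter (fun i : Fin F => entry F S p i = none) =
      ({⟨p.1.1, h1⟩, ⟨p.2.1, h2⟩} : Finset (Fin F))ᶜ := by
    ext i
    simp [entry_eq_none_iff h3 h4, Fin.ext_iff]
  rw [hrows, Finset.card_compl, Fintype.card_fin, Finset.card_pair (by simpa [Fin.ext_iff])]

theorem entry_row_eq {σ : ℕ → Finset ℕ} {F S : ℕ} {p : Column} (hp : IsCrossing σ p)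
    {i i' : Fin F} {s : Fin S} (h : entry F S p i = some s) (h' : entry F S p i' = some s) :
    i = i' := by
  rw [entry_eq_some_iff hp.row_ne] at h h'
  have := hp.symbol_ne
  simp only [Prod.ext_iff] at h h'
  exact Fin.ext (by omega)

def toArray (F S : ℕ) (M : List Column) (i : Fin F) (j : Fin M.length) : Option (Fin S) :=
  entry F S M[j] i

theorem isPDA_toArray {σ : ℕ → Finset ℕ} {F S : ℕ} {M : List Column}
    (hM : ∀ p ∈ M, InBounds F S p ∧ IsCrossing σ p) (hdisj : M.Pairwise CellDisjoint) :
    IsPDA M.length F (F - 2) S (toArray F S M) := by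
  have hbounds (j : Fin M.length) : InBounds F S M[j] := (hM _ (List.getElem_mem _)).1
  have hcross (j : Fin M.length) : IsCrossing σ M[j] := (hM _ (List.getElem_mem _)).2
  have hsome (i : Fin F) (j : Fin M.length) (s : Fin S) :=
    entry_eq_some_iff (hcross j).row_ne i s
  have hdisj' {j j' : Fin M.length} (h : j ≠ j') : CellDisjoint M[j] M[j'] := by
    rcases lt_or_gt_of_ne h with h | h
    exacts [hdisj.rel_get_of_lt h, (hdisj.rel_get_of_lt h).symm]
  refine ⟨fun i j j' s h h' => ?_, fun i i' j s => entry_row_eq (hcross j), ?_, fun j => ?_⟩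
  · by_contra hne
    obtain ⟨h11, h12, h21, h22⟩ := hdisj' hne
    rcases (hsome i j s).1 h with hc | hc <;> rcases (hsome i j' s).1 h' with hc' | hc'
    exacts [h11 (hc ▸ hc'), h12 (hc ▸ hc'), h21 (hc ▸ hc'), h22 (hc ▸ hc')]
  · intro a c b d s hne h h'
    by_cases hbd : b = d
    · subst hbd
      exact absurd (by rw [entry_row_eq (hcross b) h h']) hne
    obtain ⟨-, -, h3, h4⟩ := hbounds b
    obtain ⟨-, -, h3', h4'⟩ := hbounds d
    refine ⟨(entry_eq_none_iff h3' h4' a).2 ?_, (entry_eq_none_iff h3 h4 c).2 ?_⟩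
    · exact (hcross b).row_ne_of_symbol_eq (hcross d) (hdisj' hbd) ((hsome a b s).1 h)
        ((hsome c d s).1 h')
    · exact (hcross d).row_ne_of_symbol_eq (hcross b) (hdisj' (Ne.symm hbd)) ((hsome c d s).1 h')
        ((hsome a b s).1 h)
  · exact card_entry_eq_none (hbounds j) (hcross j).row_ne

theorem pdaExists_of_isCrossing {σ : ℕ → Finset ℕ} {F S : ℕ} {M : List Column}
    (hM : ∀ p ∈ M, InBounds F S p ∧ IsCrossing σ p) (hdisj : M.Pairwise CellDisjoint) :
    PDAExists M.length F (F - 2) S :=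
  ⟨toArray F S M, isPDA_toArray hM hdisj⟩

theorem add_mul_lt_iff {F S x k : ℕ} (hx : x < S) :
    x + k * S < F ↔ k < F / S + if x < F % S then 1 else 0 := by
  have hF := Nat.div_add_mod' F S
  have hr : F % S < S := Nat.mod_lt F (by omega)
  rcases lt_trichotomy k (F / S) with h | rfl | h
  · have := Nat.mul_le_mul_right S h
    rw [Nat.succ_mul] at this
    split_ifs <;> omega
  · split_ifs <;> omega
  · have := Nat.mul_le_mul_right S h
    rw [Nat.succ_mul] at this
    split_ifs <;> omega

theorem lt_div_mul_or_lt_mod {F S x k : ℕ} (hx : x < S) (h : x + k * S < F) :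
    x + k * S < F / S * S ∨ x < F % S := by
  have hk := (add_mul_lt_iff hx).1 h
  by_cases hq : k < F / S
  · have := Nat.mul_le_mul_right S hq
    rw [Nat.succ_mul] at this
    omega
  · split_ifs at hk with hxr <;> omega

theorem add_mul_mod_of_lt {x k S : ℕ} (hx : x < S) : (x + k * S) % S = x := by
  rw [Nat.add_mul_mod_self_right, Nat.mod_eq_of_lt hx]

/-- The set `σ b` of symbols centred at row `b`. -/
def centers : ℕ → ℕ → ℕ → Finset ℕ
  | F, S, b =>
    if _ : S = 0 then ∅
    else insert (b % S)
      (if _ : F % S = 0 then ∅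
       else if F / S * S ≤ b then
         (centers (F % S) (S - F % S) (b - F / S * S)).image (· + F % S)
       else ∅)
termination_by _ S => S
decreasing_by omega

theorem mem_centers {F S b y : ℕ} (hS : S ≠ 0) :
    y ∈ centers F S b ↔ y = b % S ∨ (F % S ≠ 0 ∧ F / S * S ≤ b ∧
      ∃ z ∈ centers (F % S) (S - F % S) (b - F / S * S), z + F % S = y) := by
  rw [centers, dif_neg hS]
  by_cases hr : F % S = 0
  · simp [hr]
  · by_cases hb : F / S * S ≤ b <;> simp [hr, hb]

theorem mem_centers_iff_eq_mod {F S b y : ℕ} (hS : S ≠ 0) (h : b < F / S * S ∨ y < F % S) :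
    y ∈ centers F S b ↔ y = b % S := by
  rw [mem_centers hS]
  constructor
  · rintro (h' | ⟨-, hb, z, -, rfl⟩)
    exacts [h', by omega]
  · exact Or.inl

theorem add_mem_centers_iff {F S x y : ℕ} (hS : S ≠ 0) (hr : F % S ≠ 0) (hx : x < F % S) :
    y + F % S ∈ centers F S (F / S * S + x) ↔ y ∈ centers (F % S) (S - F % S) x := by
  have hxS : x < S := hx.trans (Nat.mod_lt F (by omega))
  rw [mem_centers hS, Nat.add_comm (F / S * S) x, add_mul_mod_of_lt hxS, Nat.add_sub_cancel]
  simp only [add_left_inj, exists_eq_right]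
  constructor
  · rintro (h | ⟨-, -, h⟩)
    exacts [absurd h (by omega), h]
  · exact fun h => Or.inr ⟨hr, by omega, h⟩

def baseCol (S u s k : ℕ) : Column := ((u + k * S, s), (s + k * S, u))

/-- The columns `baseCol S u s k` for symbols `u < s < S`, where `k` ranges over the blocks of `S`
consecutive rows that contain row `s + k * S`. -/
def baseColumns (F S : ℕ) : List Column :=
  (List.range S).flatMap fun s => (List.range s).flatMap fun u =>
    (List.range (F / S + if s < F % S then 1 else 0)).map (baseCol S u s)

def shift (a b : ℕ) (p : Column) : Column := ((a + p.1.1, p.1.2 + b), (a + p.2.1, p.2.2 + b))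

def columns : ℕ → ℕ → List Column
  | F, S =>
    if _ : S = 0 then []
    else baseColumns F S ++
      (if _ : F % S = 0 then []
       else (columns (F % S) (S - F % S)).map (shift (F / S * S) (F % S)))
termination_by _ S => S
decreasing_by omega

theorem mem_baseColumns {F S : ℕ} {p : Column} :
    p ∈ baseColumns F S ↔ ∃ s < S, ∃ u < s, ∃ k, s + k * S < F ∧ baseCol S u s k = p := by
  simp only [baseColumns, List.mem_flatMap, List.mem_map, List.mem_range]
  constructor
  · rintro ⟨s, hs, u, hu, k, hk, rfl⟩
    exact ⟨s, hs, u, hu, k, (add_mul_lt_iff hs).2 hk, rfl⟩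
  · rintro ⟨s, hs, u, hu, k, hk, rfl⟩
    exact ⟨s, hs, u, hu, k, (add_mul_lt_iff hs).1 hk, rfl⟩

theorem columns_eq {F S : ℕ} (hS : S ≠ 0) :
    columns F S = baseColumns F S ++
      (if F % S = 0 then []
       else (columns (F % S) (S - F % S)).map (shift (F / S * S) (F % S))) := by
  rw [columns, dif_neg hS]
  split_ifs <;> rfl

theorem baseCol_isCrossing {F S u s k : ℕ} (hus : u < s) (hs : s < S) (hk : s + k * S < F) :
    InBounds F S (baseCol S u s k) ∧ IsCrossing (centers F S) (baseCol S u s k) := by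
  have hS : S ≠ 0 := by omega
  have hcenters {x y : ℕ} (hx : x < S) (hy : y = u ∨ y = s) (hxs : x ≤ s) :
      y ∈ centers F S (x + k * S) ↔ y = x := by
    -- either the column lies in a full block of rows or both its symbols are `< F % S`
    rw [mem_centers_iff_eq_mod hS, add_mul_mod_of_lt hx]
    rcases lt_div_mul_or_lt_mod hs hk with h | h <;> omega
  refine ⟨by simp only [InBounds, baseCol]; omega, ?_, ?_, ?_, ?_⟩ <;> simp only [baseCol]
  · exact (hcenters hs (Or.inr rfl) le_rfl).2 rfl
  · exact fun h => absurd ((hcenters (by omega) (Or.inr rfl) hus.le).1 h) (by omega)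
  · exact (hcenters (by omega) (Or.inl rfl) hus.le).2 rfl
  · exact fun h => absurd ((hcenters hs (Or.inl rfl) le_rfl).1 h) (by omega)

theorem shift_isCrossing {F S : ℕ} {p : Column} (hS : S ≠ 0) (hr : F % S ≠ 0)
    (hb : InBounds (F % S) (S - F % S) p) (hp : IsCrossing (centers (F % S) (S - F % S)) p) :
    InBounds F S (shift (F / S * S) (F % S) p) ∧
      IsCrossing (centers F S) (shift (F / S * S) (F % S) p) := by
  obtain ⟨h1, h2, h3, h4⟩ := hb
  have hF := Nat.div_add_mod' F S
  refine ⟨by simp only [InBounds, shift]; omega, ?_, ?_, ?_, ?_⟩ <;>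
    simp only [shift, add_mem_centers_iff hS hr h1, add_mem_centers_iff hS hr h2]
  exacts [hp.fst_mem, hp.fst_notMem, hp.snd_mem, hp.snd_notMem]

theorem columns_isCrossing {F S : ℕ} {p : Column} (hp : p ∈ columns F S) :
    InBounds F S p ∧ IsCrossing (centers F S) p := by
  induction S using Nat.strong_induction_on generalizing F p with
  | _ S ih =>
    by_cases hS : S = 0
    · simp [columns, hS] at hp
    rw [columns_eq hS, List.mem_append] at hp
    rcases hp with hp | hp
    · obtain ⟨s, hs, u, hu, k, hk, rfl⟩ := mem_baseColumns.1 hp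
      exact baseCol_isCrossing hu hs hk
    · split_ifs at hp with hr
      · simp at hp
      obtain ⟨q, hq, rfl⟩ := List.mem_map.1 hp
      have := Nat.mod_lt F (Nat.pos_of_ne_zero hS)
      obtain ⟨hb, hc⟩ := ih (S - F % S) (by omega) hq
      exact shift_isCrossing hS hr hb hc

theorem eq_of_add_mul_eq {S x x' k k' : ℕ} (hx : x < S) (hx' : x' < S)
    (h : x + k * S = x' + k' * S) : x = x' ∧ k = k' := by
  have hxx' : x = x' := by
    rw [← add_mul_mod_of_lt (k := k) hx, ← add_mul_mod_of_lt (k := k') hx', h]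
  exact ⟨hxx', Nat.eq_of_mul_eq_mul_right (m := S) (by omega) (by omega)⟩

/-- A cell `(x, y)` of a base column determines it: `x % S` and `y` are its two symbols, in
increasing order for the first cell and in decreasing order for the second, and `x / S` is `k`. -/
theorem baseCol_cellDisjoint {S u s k u' s' k' : ℕ} (hu : u < s) (hs : s < S) (hu' : u' < s')
    (hs' : s' < S) (hne : ¬(u = u' ∧ s = s' ∧ k = k')) :
    CellDisjoint (baseCol S u s k) (baseCol S u' s' k') := by
  refine ⟨?_, ?_, ?_, ?_⟩ <;> intro h <;> simp only [baseCol, Prod.mk.injEq] at h <;>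
    obtain ⟨hrow, hsym⟩ := h
  · obtain ⟨rfl, rfl⟩ := eq_of_add_mul_eq (by omega) (by omega) hrow
    exact hne ⟨rfl, hsym, rfl⟩
  · have := (eq_of_add_mul_eq (by omega) hs' hrow).1
    omega
  · have := (eq_of_add_mul_eq hs (by omega) hrow).1
    omega
  · obtain ⟨rfl, rfl⟩ := eq_of_add_mul_eq hs hs' hrow
    exact hne ⟨hsym, rfl, rfl⟩

theorem baseColumns_pairwise (F S : ℕ) : (baseColumns F S).Pairwise CellDisjoint := by
  have hdisj {s u k s' u' k' : ℕ} (hs : s < S) (hu : u < s) (hs' : s' < S) (hu' : u' < s')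
      (h : s < s' ∨ u < u' ∨ k < k') : CellDisjoint (baseCol S u s k) (baseCol S u' s' k') :=
    baseCol_cellDisjoint hu hs hu' hs' (by omega)
  simp only [baseColumns, List.pairwise_flatMap, List.pairwise_map, List.mem_flatMap,
    List.mem_map, List.mem_range]
  refine ⟨fun s hs => ⟨fun u hu => ?_, ?_⟩, ?_⟩
  · exact List.pairwise_lt_range.imp fun hk => hdisj hs hu hs hu (by omega)
  · refine List.pairwise_lt_range.imp_of_mem fun hu hu' huu' => ?_
    rintro _ ⟨k, -, rfl⟩ _ ⟨k', -, rfl⟩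
    exact hdisj hs (List.mem_range.1 hu) hs (List.mem_range.1 hu') (by omega)
  · refine List.pairwise_lt_range.imp_of_mem fun hs hs' hss' => ?_
    rintro _ ⟨u, hu, k, -, rfl⟩ _ ⟨u', hu', k', -, rfl⟩
    exact hdisj (List.mem_range.1 hs) hu (List.mem_range.1 hs') hu' (by omega)

theorem CellDisjoint.shift {p q : Column} (h : CellDisjoint p q) (a b : ℕ) :
    CellDisjoint (shift a b p) (shift a b q) := by
  have hinj {c c' : Cell} (hc : ((a + c.1, c.2 + b) : Cell) = (a + c'.1, c'.2 + b)) : c = c' := by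
    simp only [Prod.mk.injEq] at hc
    exact Prod.ext (by omega) (by omega)
  exact ⟨fun hc => h.1 (hinj hc), fun hc => h.2.1 (hinj hc), fun hc => h.2.2.1 (hinj hc),
    fun hc => h.2.2.2 (hinj hc)⟩

theorem cells_lt_of_mem_baseColumns {F S : ℕ} {p : Column} (hp : p ∈ baseColumns F S) :
    (p.1.1 < F / S * S ∨ p.1.2 < F % S) ∧ (p.2.1 < F / S * S ∨ p.2.2 < F % S) := by
  obtain ⟨s, hs, u, hu, k, hk, rfl⟩ := mem_baseColumns.1 hp
  rcases lt_div_mul_or_lt_mod hs hk with h | h <;> simp only [baseCol] <;> omega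

theorem columns_pairwise (F S : ℕ) : (columns F S).Pairwise CellDisjoint := by
  induction S using Nat.strong_induction_on generalizing F with
  | _ S ih =>
    by_cases hS : S = 0
    · simp [columns, hS]
    rw [columns_eq hS]
    split_ifs with hr
    · simpa using baseColumns_pairwise F S
    refine List.pairwise_append.2 ⟨baseColumns_pairwise F S, ?_, ?_⟩
    · have := Nat.mod_lt F (Nat.pos_of_ne_zero hS)
      exact List.pairwise_map.2 ((ih (S - F % S) (by omega) (F % S)).imp (·.shift _ _))
    · intro p hp _ hq
      obtain ⟨q, -, rfl⟩ := List.mem_map.1 hq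
      have := cells_lt_of_mem_baseColumns hp
      refine ⟨?_, ?_, ?_, ?_⟩ <;> intro h <;> simp only [shift, Prod.ext_iff] at h <;> omega

theorem sum_range_mul_add_ite {S q r : ℕ} (hr : r ≤ S) :
    ∑ s ∈ Finset.range S, s * (q + if s < r then 1 else 0) =
      q * ∑ s ∈ Finset.range S, s + ∑ s ∈ Finset.range r, s := by
  have hlow : ∀ s ∈ Finset.range r, s * (q + if s < r then 1 else 0) = q * s + s := by
    intro s hs
    rw [if_pos (Finset.mem_range.1 hs)]
    ring
  have hhigh : ∀ s ∈ Finset.Ico r S, s * (q + if s < r then 1 else 0) = q * s := by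
    intro s hs
    rw [if_neg (Finset.mem_Ico.1 hs).1.not_gt]
    ring
  rw [Finset.mul_sum, ← Finset.sum_range_add_sum_Ico _ hr, ← Finset.sum_range_add_sum_Ico _ hr,
    Finset.sum_congr rfl hlow, Finset.sum_congr rfl hhigh, Finset.sum_add_distrib]
  ring

theorem two_mul_length_baseColumns (F : ℕ) {S : ℕ} (hS : S ≠ 0) :
    2 * (baseColumns F S).length = F / S * (S * (S - 1)) + F % S * (F % S - 1) := by
  have hlen : (baseColumns F S).length =
      ∑ s ∈ Finset.range S, s * (F / S + if s < F % S then 1 else 0) := by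
    simp [baseColumns, List.length_flatMap]
    rfl
  rw [hlen, sum_range_mul_add_ite (Nat.mod_lt F (Nat.pos_of_ne_zero hS)).le, mul_add,
    mul_left_comm, mul_comm 2, Finset.sum_range_id_mul_two, mul_comm 2,
    Finset.sum_range_id_mul_two]

/-- `2 * length + 1` rather than `length`, so that no truncated subtraction or division occurs. -/
theorem two_mul_length_columns_add_one {F S : ℕ} (hF : 1 ≤ F) (hS : 1 ≤ S) :
    2 * (columns F S).length + 1 = (F - 1) * (S - 1) + Nat.gcd F S := by
  induction S using Nat.strong_induction_on generalizing F with
  | _ S ih =>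
    have hS0 : S ≠ 0 := by omega
    have hbase := two_mul_length_baseColumns F hS0
    have hF' := Nat.div_add_mod' F S
    have hrS := Nat.mod_lt F (Nat.pos_of_ne_zero hS0)
    rw [columns_eq hS0, List.length_append]
    split_ifs with hr
    · rw [Nat.gcd_eq_right (Nat.dvd_of_mod_eq_zero hr)]
      rw [hr] at hbase hF'
      simp only [List.length_nil, add_zero, zero_mul] at hbase hF' ⊢
      generalize F / S = q at hbase hF'
      zify [hF, hS] at hbase hF' ⊢
      linear_combination hbase + ((S : ℤ) - 1) * hF'
    · have hrec := ih (S - F % S) (by omega) (F := F % S) (by omega) (by omega)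
      rw [Nat.gcd_sub_self_right hrS.le] at hrec
      rw [List.length_map, Nat.gcd_comm, Nat.gcd_rec]
      have hr1 : 1 ≤ F % S := Nat.one_le_iff_ne_zero.2 hr
      generalize F / S = q at hbase hF'
      generalize F % S = r at hbase hF' hrec hr1 hrS ⊢
      have hrS' : 1 ≤ S - r := by omega
      zify [hF, hS, hr1, hrS.le, hrS'] at hbase hF' hrec ⊢
      linear_combination hbase + hrec + ((S : ℤ) - 1) * hF'

end PDA

theorem pda_lower_bound_K_Z_eq_F_sub_two (F S : ℕ) (hF : 2 ≤ F) (hS : 1 ≤ S)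
    (d : ℕ) (hd : d = Nat.gcd F S) :
    PDAExists (((F - 1) * (S - 1) + d - 1) / 2) F (F - 2) S := by
  have hlen := PDA.two_mul_length_columns_add_one (by omega : 1 ≤ F) hS
  have hK : ((F - 1) * (S - 1) + d - 1) / 2 = (PDA.columns F S).length := by
    rw [hd]
    omega
  rw [hK]
  exact PDA.pdaExists_of_isCrossing (fun _ => PDA.columns_isCrossing) (PDA.columns_pairwise F S)
end

section
/- Let F ≥ 7 and m ≥ 1 be integers and let S = mF + r with 3 ≤ r ≤ F−3. If K = K_{(F,2,S)} is the maximum number of columns of a (K, F, F−2, S)-PDA, then S ≥ ⌈(2K + 2S − SF)/F⌉ · F. -/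
namespace PDAAux

open Finset

variable {K F S : ℕ}

/-- The set of cells containing symbol `s`. -/
def Ts (P : Fin F → Fin K → Option (Fin S)) (s : Fin S) : Finset (Fin F × Fin K) :=
  Finset.univ.filter (fun p => P p.1 p.2 = some s)

lemma mem_Ts {P : Fin F → Fin K → Option (Fin S)} {s : Fin S} {p : Fin F × Fin K} :
    p ∈ Ts P s ↔ P p.1 p.2 = some s := by simp [Ts]

lemma fst_injOn {P : Fin F → Fin K → Option (Fin S)} (hP : IsPDA K F (F - 2) S P)
    (s : Fin S) : Set.InjOn Prod.fst (Ts P s : Set (Fin F × Fin K)) := by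
  intro p hp q hq h
  simp only [Finset.mem_coe, mem_Ts] at hp hq
  have : P p.1 q.2 = some s := by rw [h]; exact hq
  exact Prod.ext h (hP.1 p.1 p.2 q.2 s hp this)

lemma snd_injOn {P : Fin F → Fin K → Option (Fin S)} (hP : IsPDA K F (F - 2) S P)
    (s : Fin S) : Set.InjOn Prod.snd (Ts P s : Set (Fin F × Fin K)) := by
  intro p hp q hq h
  simp only [Finset.mem_coe, mem_Ts] at hp hq
  have : P p.1 q.2 = some s := by rw [← h]; exact hp
  exact Prod.ext (hP.2.1 p.1 q.1 q.2 s this hq) h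

/-- Each column has exactly two integer cells. -/
lemma col_card {P : Fin F → Fin K → Option (Fin S)} (hP : IsPDA K F (F - 2) S P)
    (hF : 7 ≤ F) (j : Fin K) :
    (Finset.univ.filter (fun i => P i j ≠ none)).card = 2 := by
  have h := Finset.card_filter_add_card_filter_not
    (s := (Finset.univ : Finset (Fin F))) (p := fun i => P i j = none)
  simp only [Finset.card_univ, Fintype.card_fin] at h
  have h4 := hP.2.2.2 j
  simp only [ne_eq]
  omega

/-- Every symbol occurs at most `F - 1` times. -/
lemma card_Ts_le {P : Fin F → Fin K → Option (Fin S)} (hP : IsPDA K F (F - 2) S P)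
    (hF : 7 ≤ F) (s : Fin S) : (Ts P s).card ≤ F - 1 := by
  have hle : (Ts P s).card ≤ F := by
    have := Finset.card_le_card_of_injOn Prod.fst
      (fun p _ => Finset.mem_univ p.1) (fst_injOn hP s)
    simpa using this
  by_contra hcon
  have hcard : (Ts P s).card = F := by omega
  -- the rows of occurrences of s cover all of Fin F
  have himg : (Ts P s).image Prod.fst = Finset.univ := by
    apply Finset.eq_univ_of_card
    rw [Finset.card_image_of_injOn (fst_injOn hP s), hcard, Fintype.card_fin]
  have hne : (Ts P s).Nonempty := by
    rw [← Finset.card_pos, hcard]; omega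
  obtain ⟨⟨a, b⟩, hab⟩ := hne
  rw [mem_Ts] at hab
  -- every row other than a gives a star in column b
  have hsub : Finset.univ.erase a ⊆ Finset.univ.filter (fun i => P i b = none) := by
    intro i hi
    have hia : i ≠ a := (Finset.mem_erase.mp hi).1
    have : i ∈ (Ts P s).image Prod.fst := by rw [himg]; exact Finset.mem_univ i
    obtain ⟨p, hpmem, hpeq⟩ := Finset.mem_image.mp this
    subst hpeq
    rw [mem_Ts] at hpmem
    have hne2 : (p.1, p.2) ≠ (a, b) := by
      intro h; exact hia (congrArg Prod.fst h)
    have := (hP.2.2.1 p.1 a p.2 b s hne2 hpmem hab).1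
    simp [this]
  have hcard2 := Finset.card_le_card hsub
  rw [hP.2.2.2 b] at hcard2
  simp only [Finset.card_erase_of_mem (Finset.mem_univ a), Finset.card_univ,
    Fintype.card_fin] at hcard2
  omega

/-- The sum of all symbol multiplicities is `2 K`. -/
lemma sum_card_Ts {P : Fin F → Fin K → Option (Fin S)} (hP : IsPDA K F (F - 2) S P)
    (hF : 7 ≤ F) : ∑ s : Fin S, (Ts P s).card = 2 * K := by
  classical
  have hdisj : ∀ s ∈ (Finset.univ : Finset (Fin S)), ∀ s' ∈ (Finset.univ : Finset (Fin S)),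
      s ≠ s' → Disjoint (Ts P s) (Ts P s') := by
    intro s _ s' _ hss
    rw [Finset.disjoint_left]
    intro p hp hp'
    rw [mem_Ts] at hp hp'
    exact hss (by rw [hp] at hp'; exact (Option.some_inj.mp hp'))
  have hbi : (Finset.univ : Finset (Fin S)).biUnion (Ts P) =
      Finset.univ.filter (fun p : Fin F × Fin K => P p.1 p.2 ≠ none) := by
    ext p
    simp only [Finset.mem_biUnion, Finset.mem_univ, true_and, mem_Ts,
      Finset.mem_filter, Option.ne_none_iff_exists']
  have h1 : ∑ s : Fin S, (Ts P s).card =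
      (Finset.univ.filter (fun p : Fin F × Fin K => P p.1 p.2 ≠ none)).card := by
    rw [← hbi, Finset.card_biUnion hdisj]
  rw [h1]
  rw [Finset.card_eq_sum_card_fiberwise
    (f := Prod.snd) (t := (Finset.univ : Finset (Fin K))) (fun p _ => Finset.mem_univ p.2)]
  have hfib : ∀ j : Fin K,
      ((Finset.univ.filter (fun p : Fin F × Fin K => P p.1 p.2 ≠ none)).filter
        (fun p => p.2 = j)).card = 2 := by
    intro j
    have heq : (Finset.univ.filter (fun p : Fin F × Fin K => P p.1 p.2 ≠ none)).filter
        (fun p => p.2 = j) =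
        (Finset.univ.filter (fun i => P i j ≠ none)).image (fun i => (i, j)) := by
      ext q
      simp only [Finset.mem_filter, Finset.mem_univ, true_and, Finset.mem_image]
      constructor
      · rintro ⟨h, h2⟩
        refine ⟨q.1, ?_, ?_⟩
        · rw [h2] at h; exact h
        · rw [← h2]
      · rintro ⟨i', h, rfl⟩
        exact ⟨h, rfl⟩
    have hinj2 : Function.Injective (fun i : Fin F => (i, j)) := by
      intro x y h; exact congrArg Prod.fst h
    rw [heq, Finset.card_image_of_injective _ hinj2, col_card hP hF j]
  rw [Finset.sum_congr rfl (fun j _ => hfib j)]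
  simp [Finset.card_univ, mul_comm]

/-- Symbols of multiplicity `F-1` missing row `z`. -/
def Mz (P : Fin F → Fin K → Option (Fin S)) (z : Fin F) : Finset (Fin S) :=
  Finset.univ.filter (fun s => (Ts P s).card = F - 1 ∧ ∀ j, P z j ≠ some s)

lemma mem_Mz {P : Fin F → Fin K → Option (Fin S)} {z : Fin F} {s : Fin S} :
    s ∈ Mz P z ↔ (Ts P s).card = F - 1 ∧ ∀ j, P z j ≠ some s := by simp [Mz]

/-- If `s` has multiplicity `F-1` and misses row `z`, then every column containing `s`
has an integer entry in row `z`. -/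
lemma row_z_entry {P : Fin F → Fin K → Option (Fin S)} (hP : IsPDA K F (F - 2) S P)
    (hF : 7 ≤ F) {z : Fin F} {s : Fin S} (hs : s ∈ Mz P z)
    {a : Fin F} {b : Fin K} (hab : (a, b) ∈ Ts P s) : P z b ≠ none := by
  rw [mem_Mz] at hs
  obtain ⟨hcard, hmiss⟩ := hs
  set E := (Ts P s).erase (a, b) with hE
  have hEcard : E.card = F - 2 := by
    rw [hE, Finset.card_erase_of_mem hab, hcard]; omega
  have hEinj : Set.InjOn Prod.fst (E : Set (Fin F × Fin K)) :=
    (fst_injOn hP s).mono (by intro x hx; exact Finset.erase_subset _ _ hx)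
  have hEsub : E.image Prod.fst ⊆ Finset.univ.filter (fun i => P i b = none) := by
    intro i hi
    obtain ⟨p, hpmem, hpeq⟩ := Finset.mem_image.mp hi
    subst hpeq
    have hijne : (p.1, p.2) ≠ (a, b) := by
      intro h
      exact (Finset.mem_erase.mp hpmem).1 (by rw [← h])
    have hijmem : P p.1 p.2 = some s := mem_Ts.mp (Finset.mem_of_mem_erase hpmem)
    have habmem : P a b = some s := mem_Ts.mp hab
    have := (hP.2.2.1 p.1 a p.2 b s hijne hijmem habmem).1
    simp [this]
  have hEq : E.image Prod.fst = Finset.univ.filter (fun i => P i b = none) := by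
    apply Finset.eq_of_subset_of_card_le hEsub
    rw [hP.2.2.2 b, Finset.card_image_of_injOn hEinj, hEcard]
  intro hzb
  have : z ∈ E.image Prod.fst := by
    rw [hEq]; simp [hzb]
  obtain ⟨p, hpmem, hpeq⟩ := Finset.mem_image.mp this
  have : P z p.2 = some s := by
    rw [← hpeq]; exact mem_Ts.mp (Finset.mem_of_mem_erase hpmem)
  exact hmiss p.2 this

/-- At most `m` symbols of multiplicity `F-1` miss a given row. -/
lemma card_Mz_le {P : Fin F → Fin K → Option (Fin S)} (hP : IsPDA K F (F - 2) S P)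
    (hF : 7 ≤ F) {m r : ℕ} (hm : 1 ≤ m) (hr : 3 ≤ r) (hr' : r ≤ F - 3)
    (hS : S = m * F + r) (z : Fin F) : (Mz P z).card ≤ m := by
  classical
  have hS0 : 0 < S := by omega
  set W : Finset (Fin K) := Finset.univ.filter (fun b => P z b ≠ none) with hW
  -- |W| + |Mz| ≤ S
  have hWcard : W.card + (Mz P z).card ≤ S := by
    have hinj : ∀ b ∈ W, (P z b).getD ⟨0, hS0⟩ ∈ Finset.univ \ Mz P z := by
      intro b hb
      rw [hW, Finset.mem_filter] at hb
      obtain ⟨s, hs⟩ := Option.ne_none_iff_exists'.mp hb.2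
      rw [hs]
      simp only [Option.getD_some, Finset.mem_sdiff, Finset.mem_univ, true_and]
      rw [mem_Mz]
      rintro ⟨-, hmiss⟩
      exact hmiss b hs
    have hinjOn : Set.InjOn (fun b => (P z b).getD ⟨0, hS0⟩) (W : Set (Fin K)) := by
      intro b hb b' hb' h
      simp only [Finset.mem_coe, hW, Finset.mem_filter] at hb hb'
      obtain ⟨s, hs⟩ := Option.ne_none_iff_exists'.mp hb.2
      obtain ⟨s', hs'⟩ := Option.ne_none_iff_exists'.mp hb'.2
      simp only [hs, hs', Option.getD_some] at h
      subst h
      exact hP.1 z b b' s hs hs'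
    have := Finset.card_le_card_of_injOn _ hinj hinjOn
    rw [Finset.card_sdiff_of_subset (Finset.subset_univ _), Finset.card_univ, Fintype.card_fin] at this
    have := Finset.card_le_card (Finset.subset_univ (Mz P z))
    simp only [Finset.card_univ, Fintype.card_fin] at this
    omega
  -- the columns used by the symbols in Mz: pairwise disjoint, each of size F-1, all in W
  have himgcard : ∀ s ∈ Mz P z, ((Ts P s).image Prod.snd).card = F - 1 := by
    intro s hs
    rw [Finset.card_image_of_injOn (snd_injOn hP s), (mem_Mz.mp hs).1]
  have hsubW : ∀ s ∈ Mz P z, (Ts P s).image Prod.snd ⊆ W := by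
    intro s hs b hb
    obtain ⟨p, hpmem, hpeq⟩ := Finset.mem_image.mp hb
    subst hpeq
    rw [hW, Finset.mem_filter]
    refine ⟨Finset.mem_univ _, row_z_entry hP hF hs (a := p.1) (b := p.2) ?_⟩
    simpa using hpmem
  have hdisj : ∀ s ∈ Mz P z, ∀ s' ∈ Mz P z, s ≠ s' →
      Disjoint ((Ts P s).image Prod.snd) ((Ts P s').image Prod.snd) := by
    intro s hs s' hs' hss
    rw [Finset.disjoint_left]
    intro b hb hb'
    obtain ⟨p, hpmem, hpeq⟩ := Finset.mem_image.mp hb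
    obtain ⟨q, hqmem, hqeq⟩ := Finset.mem_image.mp hb'
    set a := p.1 with ha
    set a' := q.1 with ha'
    have haP : P a b = some s := by rw [← hpeq]; exact mem_Ts.mp hpmem
    have haP' : P a' b = some s' := by rw [← hqeq]; exact mem_Ts.mp hqmem
    have haa : a ≠ a' := by
      intro h; rw [h] at haP; rw [haP] at haP'
      exact hss (Option.some_inj.mp haP')
    have haz : a ≠ z := by
      intro h; rw [h] at haP; exact (mem_Mz.mp hs).2 b haP
    have haz' : a' ≠ z := by
      intro h; rw [h] at haP'; exact (mem_Mz.mp hs').2 b haP'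
    have hzb : P z b ≠ none := by
      refine row_z_entry hP hF hs (a := a) (b := b) ?_
      exact mem_Ts.mpr haP
    have hsub3 : ({a, a', z} : Finset (Fin F)) ⊆
        Finset.univ.filter (fun i => P i b ≠ none) := by
      intro i hi
      simp only [Finset.mem_insert, Finset.mem_singleton] at hi
      rcases hi with rfl | rfl | rfl <;> simp_all
    have hcard3 : ({a, a', z} : Finset (Fin F)).card = 3 := by
      rw [Finset.card_insert_of_notMem (by simp [haa, haz]),
        Finset.card_insert_of_notMem (by simp [haz']), Finset.card_singleton]
    have := Finset.card_le_card hsub3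
    rw [hcard3, col_card hP hF b] at this
    omega
  have hbiU : ((Mz P z).biUnion (fun s => (Ts P s).image Prod.snd)).card =
      (Mz P z).card * (F - 1) := by
    rw [Finset.card_biUnion hdisj]
    rw [Finset.sum_congr rfl himgcard, Finset.sum_const, smul_eq_mul]
  have hbiUW : (Mz P z).biUnion (fun s => (Ts P s).image Prod.snd) ⊆ W :=
    Finset.biUnion_subset.mpr hsubW
  have hmain : (Mz P z).card * (F - 1) ≤ W.card := by
    rw [← hbiU]; exact Finset.card_le_card hbiUW
  -- conclude
  by_contra hcon
  push_neg at hcon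
  have h1 : (m + 1) * F ≤ (Mz P z).card * (F - 1) + (Mz P z).card := by
    have : (m + 1) * F ≤ (Mz P z).card * F := Nat.mul_le_mul_right F hcon
    have h2 : (Mz P z).card * (F - 1) + (Mz P z).card = (Mz P z).card * F := by
      have hF1 : F - 1 + 1 = F := by omega
      calc (Mz P z).card * (F - 1) + (Mz P z).card
          = (Mz P z).card * (F - 1 + 1) := (Nat.mul_succ _ _).symm
        _ = (Mz P z).card * F := by rw [hF1]
    omega
  have : (m + 1) * F ≤ S := by omega
  rw [hS, Nat.add_mul, Nat.one_mul] at this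
  omega

/-- The number of symbols of multiplicity exactly `F-1` is at most `m * F`. -/
lemma card_maxmult_le {P : Fin F → Fin K → Option (Fin S)} (hP : IsPDA K F (F - 2) S P)
    (hF : 7 ≤ F) {m r : ℕ} (hm : 1 ≤ m) (hr : 3 ≤ r) (hr' : r ≤ F - 3)
    (hS : S = m * F + r) :
    (Finset.univ.filter (fun s : Fin S => (Ts P s).card = F - 1)).card ≤ m * F := by
  classical
  have hsub : Finset.univ.filter (fun s : Fin S => (Ts P s).card = F - 1) ⊆
      (Finset.univ : Finset (Fin F)).biUnion (Mz P) := by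
    intro s hs
    rw [Finset.mem_filter] at hs
    have hcard : ((Ts P s).image Prod.fst).card = F - 1 := by
      rw [Finset.card_image_of_injOn (fst_injOn hP s), hs.2]
    have hne : (((Ts P s).image Prod.fst)ᶜ : Finset (Fin F)).Nonempty := by
      rw [← Finset.card_pos, Finset.card_compl, hcard, Fintype.card_fin]
      omega
    obtain ⟨z, hz'⟩ := hne
    have hz : z ∉ (Ts P s).image Prod.fst := Finset.mem_compl.mp hz'
    rw [Finset.mem_biUnion]
    refine ⟨z, Finset.mem_univ z, ?_⟩
    rw [mem_Mz]
    refine ⟨hs.2, fun j hj => ?_⟩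
    exact hz (Finset.mem_image.mpr ⟨(z, j), mem_Ts.mpr hj, rfl⟩)
  have hdisj : ∀ z ∈ (Finset.univ : Finset (Fin F)), ∀ z' ∈ (Finset.univ : Finset (Fin F)),
      z ≠ z' → Disjoint (Mz P z) (Mz P z') := by
    intro z _ z' _ hzz
    rw [Finset.disjoint_left]
    intro s hs hs'
    rw [mem_Mz] at hs hs'
    have hcard : ((Ts P s).image Prod.fst).card = F - 1 := by
      rw [Finset.card_image_of_injOn (fst_injOn hP s), hs.1]
    have hsub2 : (Ts P s).image Prod.fst ⊆ Finset.univ \ {z, z'} := by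
      intro i hi
      obtain ⟨p, hpmem, hpeq⟩ := Finset.mem_image.mp hi
      subst hpeq
      have hPij : P p.1 p.2 = some s := mem_Ts.mp hpmem
      simp only [Finset.mem_sdiff, Finset.mem_univ, true_and, Finset.mem_insert,
        Finset.mem_singleton]
      push_neg
      constructor
      · intro h; rw [h] at hPij; exact hs.2 p.2 hPij
      · intro h; rw [h] at hPij; exact hs'.2 p.2 hPij
    have := Finset.card_le_card hsub2
    rw [hcard, Finset.card_sdiff_of_subset (Finset.subset_univ _), Finset.card_univ,
      Fintype.card_fin] at this
    have : ({z, z'} : Finset (Fin F)).card = 2 := Finset.card_pair hzz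
    omega
  calc (Finset.univ.filter (fun s : Fin S => (Ts P s).card = F - 1)).card
      ≤ ((Finset.univ : Finset (Fin F)).biUnion (Mz P)).card := Finset.card_le_card hsub
    _ = ∑ z : Fin F, (Mz P z).card := Finset.card_biUnion hdisj
    _ ≤ ∑ _z : Fin F, m := Finset.sum_le_sum (fun z _ => card_Mz_le hP hF hm hr hr' hS z)
    _ = m * F := by simp [Finset.card_univ, mul_comm]

/-- The key arithmetic bound: `2K + 2S ≤ S F + m F` (over ℤ). -/
lemma key_bound {P : Fin F → Fin K → Option (Fin S)} (hP : IsPDA K F (F - 2) S P)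
    (hF : 7 ≤ F) {m r : ℕ} (hm : 1 ≤ m) (hr : 3 ≤ r) (hr' : r ≤ F - 3)
    (hS : S = m * F + r) :
    2 * (K : ℤ) + 2 * (S : ℤ) - (S : ℤ) * (F : ℤ) ≤ (m : ℤ) * (F : ℤ) := by
  classical
  have hterm : ∀ s : Fin S, ((Ts P s).card : ℤ) + 2 - (F : ℤ) ≤
      (if (Ts P s).card = F - 1 then (1 : ℤ) else 0) := by
    intro s
    have h1 := card_Ts_le hP hF s
    by_cases h : (Ts P s).card = F - 1
    · simp only [h, if_pos]
      have : ((F : ℕ) - 1 : ℕ) = F - 1 := rfl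
      push_cast [h]
      omega
    · simp only [h, if_neg, ite_false]
      have : (Ts P s).card ≤ F - 2 := by omega
      push_cast
      omega
  have hsum := Finset.sum_le_sum (fun s (_ : s ∈ Finset.univ) => hterm s)
  rw [← Finset.sum_filter] at hsum
  simp only [Finset.sum_const, nsmul_eq_mul, smul_eq_mul, mul_one] at hsum
  have hsumL : ∑ s : Fin S, (((Ts P s).card : ℤ) + 2 - (F : ℤ)) =
      2 * (K : ℤ) + (S : ℤ) * (2 - (F : ℤ)) := by
    rw [Finset.sum_sub_distrib, Finset.sum_add_distrib, Finset.sum_const, Finset.sum_const]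
    have h2K : ∑ s : Fin S, ((Ts P s).card : ℤ) = 2 * (K : ℤ) := by
      rw [← Nat.cast_sum]
      rw [sum_card_Ts hP hF]
      push_cast; ring
    rw [h2K]
    simp [Finset.card_univ]
    ring
  rw [hsumL] at hsum
  have hN := card_maxmult_le hP hF hm hr hr' hS
  have hN' : ((Finset.univ.filter (fun s : Fin S => (Ts P s).card = F - 1)).card : ℤ) ≤
      (m : ℤ) * (F : ℤ) := by exact_mod_cast hN
  linarith [hsum, hN']

end PDAAux

theorem pda_optimal_S_divisibility_bound (F m r S K : ℕ) (hF : 7 ≤ F) (hm : 1 ≤ m)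
    (hr : 3 ≤ r) (hr' : r ≤ F - 3) (hS : S = m * F + r)
    (hmax : IsGreatest {K' : ℕ | PDAExists K' F (F - 2) S} K) :
    ⌈(2 * (K : ℚ) + 2 * (S : ℚ) - (S : ℚ) * (F : ℚ)) / (F : ℚ)⌉ * (F : ℤ) ≤ (S : ℤ) := by
  obtain ⟨P, hP⟩ := hmax.1
  have hkey := PDAAux.key_bound hP hF hm hr hr' hS
  have hF0 : (0 : ℚ) < (F : ℚ) := by
    exact_mod_cast (by omega : (0 : ℕ) < F)
  have hceil : ⌈(2 * (K : ℚ) + 2 * (S : ℚ) - (S : ℚ) * (F : ℚ)) / (F : ℚ)⌉ ≤ (m : ℤ) := by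
    rw [Int.ceil_le, div_le_iff₀ hF0]
    push_cast
    exact_mod_cast hkey
  have hmF : (m : ℤ) * (F : ℤ) ≤ (S : ℤ) := by
    have : m * F ≤ S := by rw [hS]; exact Nat.le_add_right _ _
    exact_mod_cast this
  calc ⌈(2 * (K : ℚ) + 2 * (S : ℚ) - (S : ℚ) * (F : ℚ)) / (F : ℚ)⌉ * (F : ℤ)
      ≤ (m : ℤ) * (F : ℤ) := by
        apply mul_le_mul_of_nonneg_right hceil
        exact_mod_cast Nat.zero_le F
    _ ≤ (S : ℤ) := hmF
end

section
/- Let F ≥ 7 and m ≥ 1 be integers, let S = mF + r with 3 ≤ r ≤ F−3, and let d = gcd(F,S). Let P be a (K, F, F−2, S)-PDA with K maximal, i.e., K = K_{(F,2,S)}. Then every row of P contains at most S − (m+1) cells occupied by integers, and at least F − r + d rows of P contain exactly S − (m+1) cells occupied by integers. -/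
/-!
Every column of a `(K, F, F - 2, S)`-PDA holds exactly two integers. If row `i` holds `n`
integers, each of its `n` columns holds a second integer `v` in a row `a ≠ i`, and `v` does
not occur in row `i` (otherwise the corner condition puts `*` in row `i` of that column);
distinct columns give distinct pairs `(a, v)`. Hence `n ≤ (F - 1)(S - n)`, which forces
`n ≤ S - (m + 1)`.

For the second claim, maximality of `K` is played against an explicit PDA. Its columns are the
cells of the `F × S` grid lying strictly above the diagonal, each paired with a cell strictly
below it in such a way that the two remaining corners of the pair are crossed by the diagonal.
There are as many cells above the diagonal as below it, and the diagonal crosses `F + S - d`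
cells, so `2K ≥ FS + d - F - S`. On the other hand
`2K = ∑ᵢ nᵢ ≤ F (S - m - 2) + t`, where `t` counts the rows attaining `S - (m + 1)`, so that
`t ≥ F - r + d`.
-/

open Finset

namespace IsPDA

variable {K F Z S : ℕ} {P : Fin F → Fin K → Option (Fin S)}

theorem card_filled_col (hP : IsPDA K F Z S P) (j : Fin K) :
    #{i | P i j ≠ none} = F - Z := by
  have := card_filter_add_card_filter_not (s := univ) (fun i => P i j = none)
  rw [card_univ, Fintype.card_fin, hP.2.2.2 j] at this
  simp only [ne_eq]
  omega

theorem sum_card_filled_row (hP : IsPDA K F Z S P) :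
    ∑ i, #{j | P i j ≠ none} = (F - Z) * K := by
  simp only [card_filter]
  rw [sum_comm]
  simp only [← card_filter, hP.card_filled_col, sum_const, card_univ, Fintype.card_fin,
    smul_eq_mul, mul_comm]

theorem card_filled_row_eq_card_values (hP : IsPDA K F Z S P) (i : Fin F) :
    #{j | P i j ≠ none} = #{v | ∃ j, P i j = some v} := by
  refine le_antisymm (card_le_card_of_forall_subsingleton (fun j v => P i j = some v) ?_ ?_)
    (card_le_card_of_forall_subsingleton (fun v j => P i j = some v) ?_ ?_)
  · intro j hj
    obtain ⟨v, hv⟩ := Option.ne_none_iff_exists'.mp (mem_filter.mp hj).2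
    exact ⟨v, mem_filter.mpr ⟨mem_univ _, j, hv⟩, hv⟩
  · intro v _ j hj j' hj'
    exact hP.1 i j j' v hj.2 hj'.2
  · intro v hv
    obtain ⟨j, hj⟩ := (mem_filter.mp hv).2
    exact ⟨j, mem_filter.mpr ⟨mem_univ _, by simp [hj]⟩, hj⟩
  · intro j _ v hv v' hv'
    exact Option.some_injective _ (hv.2.symm.trans hv'.2)

theorem card_filled_row_le_mul (hP : IsPDA K F Z S P) (hZ : Z + 2 ≤ F) (i : Fin F) :
    #{j | P i j ≠ none} ≤ (F - 1) * (S - #{j | P i j ≠ none}) := by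
  set A : Finset (Fin S) := {v | ∃ j, P i j = some v}
  calc #{j | P i j ≠ none}
      ≤ #((univ.erase i) ×ˢ (univ \ A)) := by
        refine card_le_card_of_forall_subsingleton (fun j c => P c.1 j = some c.2) ?_ ?_
        · intro j hj
          have htwo : 1 < #{a | P a j ≠ none} := by rw [hP.card_filled_col]; omega
          obtain ⟨a, ha, hai⟩ := exists_mem_ne htwo i
          obtain ⟨v, hv⟩ := Option.ne_none_iff_exists'.mp (mem_filter.mp ha).2
          refine ⟨(a, v), mem_product.mpr ⟨mem_erase.mpr ⟨hai, mem_univ _⟩, ?_⟩, hv⟩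
          simp only [A, mem_sdiff, mem_univ, mem_filter, true_and, not_exists]
          intro j' hj'
          exact (mem_filter.mp hj).2 (hP.2.2.1 a i j j' v (by simp [hai]) hv hj').2
        · intro c _ j hj j' hj'
          exact hP.1 c.1 j j' c.2 hj.2 hj'.2
    _ = (F - 1) * (S - #{j | P i j ≠ none}) := by
        rw [card_product, card_erase_of_mem (mem_univ i), card_sdiff_of_subset (subset_univ A),
          hP.card_filled_row_eq_card_values]
        simp [A]

end IsPDA

theorem Nat.le_sub_succ_of_le_mul_sub {n F S m r : ℕ} (hn : n ≤ (F - 1) * (S - n))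
    (hS : S = m * F + r) (hr : 0 < r) : n ≤ S - (m + 1) := by
  by_contra! h
  have := hn.trans (Nat.mul_le_mul_left (F - 1) (by omega : S - n ≤ m))
  rcases F with _ | F
  · rw [zero_tsub, zero_mul] at this
    omega
  · rw [add_tsub_cancel_right, mul_comm] at this
    rw [hS, Nat.mul_succ] at h
    omega

theorem Finset.sum_le_card_mul_pred_add_card_filter_eq {ι : Type*} (s : Finset ι) (f : ι → ℕ)
    {M : ℕ} (hf : ∀ i ∈ s, f i ≤ M) :
    ∑ i ∈ s, f i ≤ #s * (M - 1) + #{i ∈ s | f i = M} := by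
  calc ∑ i ∈ s, f i ≤ ∑ i ∈ s, ((M - 1) + if f i = M then 1 else 0) := by
        refine sum_le_sum fun i hi => ?_
        have := hf i hi
        split_ifs <;> omega
    _ = #s * (M - 1) + #{i ∈ s | f i = M} := by
        rw [sum_add_distrib, sum_const, smul_eq_mul, card_filter]

section PairArray

variable {K F S : ℕ} (p q : Fin K → Fin F × Fin S)

def pairArray : Fin F → Fin K → Option (Fin S) := fun a j =>
  if a = (p j).1 then some (p j).2 else if a = (q j).1 then some (q j).2 else none

variable {p q}

theorem pairArray_eq_some (hpq : ∀ j, (p j).1 ≠ (q j).1) {a : Fin F} {j : Fin K} {v : Fin S} :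
    pairArray p q a j = some v ↔ (a, v) = p j ∨ (a, v) = q j := by
  unfold pairArray
  split_ifs with hp hq
  · subst hp
    simp [Prod.ext_iff, hpq j, eq_comm]
  · subst hq
    simp [Prod.ext_iff, Ne.symm hp, eq_comm]
  · simp [Prod.ext_iff, hp, hq]

theorem pairArray_eq_none {a : Fin F} {j : Fin K} :
    pairArray p q a j = none ↔ a ≠ (p j).1 ∧ a ≠ (q j).1 := by
  unfold pairArray
  split_ifs <;> simp_all

theorem pairArray_col_eq_of_eq_some (hp : p.Injective) (hq : q.Injective)
    (hpq : ∀ j j', p j ≠ q j') (hrow : ∀ j, (p j).1 ≠ (q j).1) {i : Fin F} {j j' : Fin K}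
    {v : Fin S} (h : pairArray p q i j = some v) (h' : pairArray p q i j' = some v) : j = j' := by
  rw [pairArray_eq_some hrow] at h h'
  rcases h with h | h <;> rcases h' with h' | h'
  · exact hp (h.symm.trans h')
  · exact absurd (h.symm.trans h') (hpq j j')
  · exact absurd (h'.symm.trans h) (hpq j' j)
  · exact hq (h.symm.trans h')

theorem isPDA_pairArray (hp : p.Injective) (hq : q.Injective) (hpq : ∀ j j', p j ≠ q j')
    (hcross : ∀ j, ((p j).1, (q j).2) ∉ Set.range p ∪ Set.range q ∧
      ((q j).1, (p j).2) ∉ Set.range p ∪ Set.range q) :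
    IsPDA K F (F - 2) S (pairArray p q) := by
  have hrow (j : Fin K) : (p j).1 ≠ (q j).1 := fun h =>
    (hcross j).2 (Or.inl ⟨j, Prod.ext h rfl⟩)
  have hval (j : Fin K) : (p j).2 ≠ (q j).2 := fun h =>
    (hcross j).1 (Or.inl ⟨j, Prod.ext rfl h⟩)
  have hcol {i j j' v} : pairArray p q i j = some v → pairArray p q i j' = some v → j = j' :=
    pairArray_col_eq_of_eq_some hp hq hpq hrow
  have hcorner (a c b d s) (hne : (a, b) ≠ (c, d)) (hab : pairArray p q a b = some s)
      (hcd : pairArray p q c d = some s) : pairArray p q a d = none := by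
    have hac : a ≠ c := fun hac => hne (by
      subst hac
      rw [hcol hab hcd])
    have hused : (a, s) ∈ Set.range p ∪ Set.range q := by
      rcases (pairArray_eq_some hrow).mp hab with h | h
      exacts [Or.inl ⟨b, h.symm⟩, Or.inr ⟨b, h.symm⟩]
    rw [pairArray_eq_some hrow] at hcd
    rw [pairArray_eq_none]
    rcases hcd with h | h <;> constructor <;> rintro rfl
    · exact hac (congrArg Prod.fst h).symm
    · exact (hcross d).2 (congrArg Prod.snd h ▸ hused)
    · exact (hcross d).1 (congrArg Prod.snd h ▸ hused)
    · exact hac (congrArg Prod.fst h).symm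
  refine ⟨fun i j j' v => hcol, ?_, fun a c b d s hne hab hcd =>
    ⟨hcorner a c b d s hne hab hcd, hcorner c a d b s hne.symm hcd hab⟩, fun j => ?_⟩
  · intro i i' j s h h'
    rw [pairArray_eq_some hrow] at h h'
    rcases h with h | h <;> rcases h' with h' | h'
    · exact congrArg Prod.fst (h.trans h'.symm)
    · exact absurd (by rw [← h, ← h']) (hval j)
    · exact absurd (by rw [← h, ← h']) (hval j)
    · exact congrArg Prod.fst (h.trans h'.symm)
  · have hnone : ({i | pairArray p q i j = none} : Finset (Fin F))
        = (univ.erase (p j).1).erase (q j).1 := by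
      ext i
      simp [pairArray_eq_none, and_comm]
    rw [hnone, card_erase_of_mem (mem_erase.mpr ⟨(hrow j).symm, mem_univ _⟩),
      card_erase_of_mem (mem_univ _), card_univ, Fintype.card_fin]
    omega

end PairArray

theorem pdaExists_of_injOn {F S : ℕ} (U : Finset (ℕ × ℕ)) (φ : ℕ × ℕ → ℕ × ℕ)
    (hU : ∀ c ∈ U, c.1 < F ∧ c.2 < S) (hφU : ∀ c ∈ U, (φ c).1 < F ∧ (φ c).2 < S)
    (hφ : Set.InjOn φ U) (hdisj : ∀ c ∈ U, φ c ∉ U)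
    (hcross : ∀ c ∈ U,
      (c.1, (φ c).2) ∉ U ∪ U.image φ ∧ ((φ c).1, c.2) ∉ U ∪ U.image φ) :
    PDAExists #U F (F - 2) S := by
  classical
  let e := U.equivFin.symm
  let ι : Fin F × Fin S → ℕ × ℕ := Prod.map Fin.val Fin.val
  let p j : Fin F × Fin S := (⟨(e j).1.1, (hU _ (e j).2).1⟩, ⟨(e j).1.2, (hU _ (e j).2).2⟩)
  let q j : Fin F × Fin S :=
    (⟨(φ (e j)).1, (hφU _ (e j).2).1⟩, ⟨(φ (e j)).2, (hφU _ (e j).2).2⟩)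
  have hmem {x} : x ∈ Set.range p ∪ Set.range q → ι x ∈ U ∪ U.image φ := by
    rintro (⟨j, rfl⟩ | ⟨j, rfl⟩)
    · exact mem_union_left _ (e j).2
    · exact mem_union_right _ (mem_image_of_mem φ (e j).2)
  refine ⟨pairArray p q, isPDA_pairArray ?_ ?_ ?_ fun j =>
    ⟨fun h => (hcross _ (e j).2).1 (hmem h), fun h => (hcross _ (e j).2).2 (hmem h)⟩⟩
  · exact fun j j' h => e.injective (Subtype.ext (congrArg ι h :))
  · exact fun j j' h => e.injective (Subtype.ext (hφ (e j).2 (e j').2 (congrArg ι h)))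
  · intro j j' h
    have h' : (e j : ℕ × ℕ) = φ (e j') := congrArg ι h
    exact hdisj _ (e j').2 (h' ▸ (e j).2)

theorem Nat.mul_ceilDiv_lt_add {a b : ℕ} (hb : 0 < b) : b * (a ⌈/⌉ b) < a + b := by
  rw [Nat.ceilDiv_eq_add_pred_div]
  have := Nat.mul_div_le (a + b - 1) b
  omega

theorem Nat.ceilDiv_add_ite_dvd {a b : ℕ} (hb : 0 < b) :
    a ⌈/⌉ b + (if b ∣ a then 1 else 0) = a / b + 1 := by
  split_ifs with h
  · obtain ⟨k, rfl⟩ := h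
    rw [← smul_eq_mul, smul_ceilDiv hb, smul_eq_mul, Nat.mul_div_cancel_left k hb]
  · have hC1 : a ≤ b * (a ⌈/⌉ b) := le_smul_ceilDiv hb
    have hC2 := Nat.mul_ceilDiv_lt_add (a := a) hb
    have hq1 : b * (a / b) < a := Nat.mul_div_lt_iff_not_dvd.mpr h
    have hq2 := Nat.lt_div_mul_add (a := a) hb
    have h1 : a / b < a ⌈/⌉ b := Nat.lt_of_mul_lt_mul_left (a := b) (by omega)
    have h2 : a ⌈/⌉ b < a / b + 2 :=
      Nat.lt_of_mul_lt_mul_left (a := b) (by rw [mul_add]; linarith)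
    omega

theorem Nat.card_range_filter_dvd_mul (F S : ℕ) (hF : 0 < F) :
    #{i ∈ range F | F ∣ (i + 1) * S} = Nat.gcd F S := by
  have hd : 0 < Nat.gcd F S := Nat.gcd_pos_of_pos_left S hF
  have hiff (k : ℕ) : F ∣ k * S ↔ F / Nat.gcd F S ∣ k := by
    rw [← Nat.dvd_mul_gcd_iff_dvd_mul, mul_comm,
      Nat.div_dvd_iff_dvd_mul (Nat.gcd_dvd_left F S) hd]
  simp only [hiff]
  rw [Nat.card_multiples, Nat.div_div_self (Nat.gcd_dvd_left F S) hF.ne']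

theorem Finset.card_filter_product_eq_sum {α β : Type*} (s : Finset α) (t : Finset β)
    (p : α × β → Prop) [DecidablePred p] :
    #{c ∈ s ×ˢ t | p c} = ∑ a ∈ s, #{b ∈ t | p (a, b)} := by
  simp only [card_filter, sum_product]

section Diagonal

variable (F S : ℕ)

/-- Cell `(i, s)` is the unit square `[i, i + 1] × [s, s + 1]` of the rectangle
`[0, F] × [0, S]`. Upper and lower cells lie strictly above and below its diagonal from `(0, 0)`
to `(F, S)`; crossed cells meet the open diagonal. -/
def upperCells : Finset (ℕ × ℕ) := {c ∈ range F ×ˢ range S | (c.1 + 1) * S ≤ c.2 * F}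

def lowerCells : Finset (ℕ × ℕ) := {c ∈ range F ×ˢ range S | (c.2 + 1) * F ≤ c.1 * S}

def IsCrossedCell (c : ℕ × ℕ) : Prop := c.1 * S < (c.2 + 1) * F ∧ c.2 * F < (c.1 + 1) * S

/-- The rank, counted from `1`, of an upper cell among the upper cells of its row. -/
def upperRank (c : ℕ × ℕ) : ℕ := c.2 + 1 - (c.1 + 1) * S ⌈/⌉ F

/-- The upper cell `(i, s)` of rank `ρ` is sent to the lower cell `(x, t)` of rank `ρ`, counted
from the diagonal, in row `x = i + ⌈ρF/S⌉`: this row makes `(x, s)` a crossed cell, and then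
`(i, t)` is crossed too. -/
def partner (c : ℕ × ℕ) : ℕ × ℕ :=
  (c.1 + upperRank F S c * F ⌈/⌉ S,
    (c.1 + upperRank F S c * F ⌈/⌉ S) * S / F - upperRank F S c)

variable {F S}

theorem mem_upperCells {c : ℕ × ℕ} :
    c ∈ upperCells F S ↔ (c.1 < F ∧ c.2 < S) ∧ (c.1 + 1) * S ≤ c.2 * F := by
  simp [upperCells]

theorem mem_lowerCells {c : ℕ × ℕ} :
    c ∈ lowerCells F S ↔ (c.1 < F ∧ c.2 < S) ∧ (c.2 + 1) * F ≤ c.1 * S := by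
  simp [lowerCells]

theorem notMem_upperCells_of_mem_lowerCells (hS : 0 < S) {c : ℕ × ℕ}
    (hc : c ∈ lowerCells F S) : c ∉ upperCells F S := fun hc' => by
  linarith [(mem_lowerCells.mp hc).2, (mem_upperCells.mp hc').2]

theorem IsCrossedCell.notMem_union {c : ℕ × ℕ} (hc : IsCrossedCell F S c) :
    c ∉ upperCells F S ∪ lowerCells F S := by
  simp only [mem_union, mem_upperCells, mem_lowerCells]
  unfold IsCrossedCell at hc
  omega

theorem upperRank_spec (hF : 0 < F) {c : ℕ × ℕ} (hc : c ∈ upperCells F S) :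
    0 < upperRank F S c ∧ c.2 + 1 = (c.1 + 1) * S ⌈/⌉ F + upperRank F S c := by
  have hC : (c.1 + 1) * S ⌈/⌉ F ≤ c.2 :=
    (ceilDiv_le_iff_le_mul hF).2 (by linarith [(mem_upperCells.mp hc).2])
  unfold upperRank
  omega

theorem upperRank_le (hF : 0 < F) (hS : 0 < S) (c : ℕ × ℕ) :
    upperRank F S c ≤ (c.1 + upperRank F S c * F ⌈/⌉ S) * S / F := by
  rw [Nat.le_div_iff_mul_le hF]
  have : upperRank F S c * F ≤ S * (upperRank F S c * F ⌈/⌉ S) := le_smul_ceilDiv hS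
  nlinarith

theorem partner_injOn (hF : 0 < F) (hS : 0 < S) :
    Set.InjOn (partner F S) (upperCells F S) := by
  intro c hc c' hc' h
  obtain ⟨hx, ht⟩ := Prod.ext_iff.mp h
  simp only [partner] at hx ht
  have hle := upperRank_le hF hS c
  have hle' := upperRank_le hF hS c'
  have hρ : upperRank F S c = upperRank F S c' := by
    rw [hx] at ht hle
    omega
  have hi : c.1 = c'.1 := by
    rw [hρ] at hx
    omega
  have hs := (upperRank_spec hF hc).2
  have hs' := (upperRank_spec hF hc').2
  rw [hi, hρ] at hs
  exact Prod.ext hi (by omega)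

theorem partner_spec (hF : 0 < F) (hS : 0 < S) {c : ℕ × ℕ} (hc : c ∈ upperCells F S) :
    partner F S c ∈ lowerCells F S ∧ IsCrossedCell F S (c.1, (partner F S c).2) ∧
      IsCrossedCell F S ((partner F S c).1, c.2) := by
  obtain ⟨⟨hi, hs⟩, hup⟩ := mem_upperCells.mp hc
  obtain ⟨hρ0, hρ⟩ := upperRank_spec hF hc
  have hρB := upperRank_le hF hS c
  have hC1 : (c.1 + 1) * S ≤ F * ((c.1 + 1) * S ⌈/⌉ F) := le_smul_ceilDiv hF
  have hC2 := Nat.mul_ceilDiv_lt_add (a := (c.1 + 1) * S) hF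
  have hκ1 : upperRank F S c * F ≤ S * (upperRank F S c * F ⌈/⌉ S) := le_smul_ceilDiv hS
  have hκ2 := Nat.mul_ceilDiv_lt_add (a := upperRank F S c * F) hS
  have hB1 := Nat.div_mul_le_self ((c.1 + upperRank F S c * F ⌈/⌉ S) * S) F
  have hB2 := Nat.lt_div_mul_add (a := (c.1 + upperRank F S c * F ⌈/⌉ S) * S) hF
  simp only [partner, mem_lowerCells, IsCrossedCell]
  obtain ⟨i, s⟩ := c
  dsimp only at *
  generalize (i + 1) * S ⌈/⌉ F = C at *
  generalize upperRank F S (i, s) = ρ at *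
  generalize ρ * F ⌈/⌉ S = κ at *
  generalize (i + κ) * S / F = B at *
  obtain ⟨t, rfl⟩ : ∃ t, B = t + ρ := ⟨B - ρ, by omega⟩
  rw [Nat.add_sub_cancel]
  have hρF : (s + 1) * F = F * C + ρ * F := by rw [hρ]; ring
  have hxs : (i + κ) * S < (s + 1) * F := by linarith
  have hts : t * F < (i + 1) * S := by linarith
  refine ⟨⟨⟨?_, ?_⟩, by nlinarith⟩, ⟨by linarith, hts⟩, hxs, by linarith⟩
  · have : (s + 1) * F ≤ S * F := Nat.mul_le_mul_right F hs
    exact Nat.lt_of_mul_lt_mul_right (a := S) (by linarith)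
  · have : t * F < s * F := by linarith
    exact (Nat.lt_of_mul_lt_mul_right this).trans hs

theorem pdaExists_card_upperCells (hF : 0 < F) (hS : 0 < S) :
    PDAExists #(upperCells F S) F (F - 2) S := by
  have hsub : upperCells F S ∪ (upperCells F S).image (partner F S) ⊆
      upperCells F S ∪ lowerCells F S :=
    union_subset_union subset_rfl (image_subset_iff.2 fun c hc => (partner_spec hF hS hc).1)
  refine pdaExists_of_injOn (upperCells F S) (partner F S) (fun c hc => (mem_upperCells.mp hc).1)
    (fun c hc => (mem_lowerCells.mp (partner_spec hF hS hc).1).1) (partner_injOn hF hS)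
    (fun c hc => notMem_upperCells_of_mem_lowerCells hS (partner_spec hF hS hc).1)
    fun c hc => ?_
  obtain ⟨-, hcross₁, hcross₂⟩ := partner_spec hF hS hc
  exact ⟨fun h => hcross₁.notMem_union (hsub h), fun h => hcross₂.notMem_union (hsub h)⟩

theorem card_upperCells_row (hF : 0 < F) (i : ℕ) :
    #{s ∈ range S | (i + 1) * S ≤ s * F} = S - (i + 1) * S ⌈/⌉ F := by
  have : {s ∈ range S | (i + 1) * S ≤ s * F} = Ico ((i + 1) * S ⌈/⌉ F) S := by
    ext s
    simp only [mem_filter, mem_range, mem_Ico, ceilDiv_le_iff_le_mul hF, mul_comm F s]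
    tauto
  rw [this, Nat.card_Ico]

theorem card_lowerCells_row (hF : 0 < F) {i : ℕ} (hi : i ≤ F) :
    #{s ∈ range S | (s + 1) * F ≤ i * S} = i * S / F := by
  have hle : i * S / F ≤ S := Nat.div_le_of_le_mul (Nat.mul_le_mul_right S hi)
  have : {s ∈ range S | (s + 1) * F ≤ i * S} = range (i * S / F) := by
    ext s
    simp only [mem_filter, mem_range, ← Nat.le_div_iff_mul_le hF]
    omega
  rw [this, card_range]

theorem card_upperCells_add_card_lowerCells (hF : 0 < F) :
    #(upperCells F S) + #(lowerCells F S) + F + S = F * S + Nat.gcd F S := by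
  have hrow (i : ℕ) (hi : i ∈ range F) :
      #{s ∈ range S | (i + 1) * S ≤ s * F} + (i + 1) * S / F + 1
        = S + if F ∣ (i + 1) * S then 1 else 0 := by
    have hC : (i + 1) * S ⌈/⌉ F ≤ S :=
      (ceilDiv_le_iff_le_mul hF).2 (Nat.mul_le_mul_right S (mem_range.mp hi))
    have := Nat.ceilDiv_add_ite_dvd (a := (i + 1) * S) hF
    rw [card_upperCells_row hF]
    omega
  have htel : ∑ i ∈ range F, (i + 1) * S / F = ∑ i ∈ range F, i * S / F + S := by
    have h1 := sum_range_succ' (fun i => i * S / F) F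
    have h2 := sum_range_succ (fun i => i * S / F) F
    rw [zero_mul, Nat.zero_div, add_zero] at h1
    rw [Nat.mul_div_cancel_left S hF] at h2
    exact h1.symm.trans h2
  have hsum := sum_congr rfl hrow
  rw [sum_add_distrib, sum_add_distrib, sum_add_distrib, sum_const, sum_const, card_range,
    ← card_filter, Nat.card_range_filter_dvd_mul F S hF, htel] at hsum
  simp only [smul_eq_mul, mul_one] at hsum
  have hlow : #(lowerCells F S) = ∑ i ∈ range F, i * S / F := by
    rw [lowerCells, card_filter_product_eq_sum]
    exact sum_congr rfl fun i hi => card_lowerCells_row hF (mem_range.mp hi).le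
  rw [upperCells, card_filter_product_eq_sum, hlow]
  linarith

theorem card_upperCells_eq_card_lowerCells : #(upperCells F S) = #(lowerCells F S) := by
  have hinv {c : ℕ × ℕ} (h : c.1 < F ∧ c.2 < S) :
      (F - 1 - (F - 1 - c.1), S - 1 - (S - 1 - c.2)) = c := by
    ext <;> simp only <;> omega
  refine card_nbij' (fun c => (F - 1 - c.1, S - 1 - c.2)) (fun c => (F - 1 - c.1, S - 1 - c.2))
    ?_ ?_ (fun c hc => hinv (mem_upperCells.mp hc).1)
      (fun c hc => hinv (mem_lowerCells.mp hc).1) <;>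
  · rintro ⟨i, s⟩ hc
    simp only [mem_coe, mem_upperCells, mem_lowerCells] at hc ⊢
    obtain ⟨⟨hi, hs⟩, h⟩ := hc
    obtain ⟨i', rfl⟩ := Nat.exists_eq_add_of_lt hi
    obtain ⟨s', rfl⟩ := Nat.exists_eq_add_of_lt hs
    refine ⟨⟨by omega, by omega⟩, ?_⟩
    rw [show i + i' + 1 - 1 - i = i' by omega, show s + s' + 1 - 1 - s = s' by omega]
    nlinarith

theorem two_mul_card_upperCells (hF : 0 < F) :
    2 * #(upperCells F S) + F + S = F * S + Nat.gcd F S := by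
  rw [two_mul, ← card_upperCells_add_card_lowerCells hF, card_upperCells_eq_card_lowerCells]

end Diagonal

theorem pda_max_row_count_general (F m r S d K : ℕ)
    (hr : 3 ≤ r) (hr' : r ≤ F - 3) (hS : S = m * F + r) (hd : d = Nat.gcd F S)
    (P : Fin F → Fin K → Option (Fin S)) (hP : IsPDA K F (F - 2) S P)
    (hmax : ∀ K', PDAExists K' F (F - 2) S → K' ≤ K) :
    (∀ i : Fin F,
        (Finset.univ.filter (fun j : Fin K => P i j ≠ none)).card ≤ S - (m + 1)) ∧
      F - r + d ≤ (Finset.univ.filter (fun i : Fin F =>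
        (Finset.univ.filter (fun j : Fin K => P i j ≠ none)).card = S - (m + 1))).card := by
  have hrow (i : Fin F) : #{j | P i j ≠ none} ≤ S - (m + 1) :=
    Nat.le_sub_succ_of_le_mul_sub (hP.card_filled_row_le_mul (by omega) i) hS (by omega)
  refine ⟨hrow, ?_⟩
  have hK : #(upperCells F S) ≤ K := hmax _ (pdaExists_card_upperCells (by omega) (by omega))
  have hcells := two_mul_card_upperCells (S := S) (by omega : 0 < F)
  have hfull := sum_le_card_mul_pred_add_card_filter_eq univ _ fun i _ => hrow i
  rw [hP.sum_card_filled_row, card_univ, Fintype.card_fin,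
    show F - (F - 2) = 2 by omega] at hfull
  have hFS : F * (S - (m + 1) - 1) + F * m + 2 * F = F * S := by
    have : m ≤ m * F := Nat.le_mul_of_pos_right m (by omega)
    calc _ = F * (S - (m + 1) - 1 + m + 2) := by ring
      _ = F * S := by congr 1; omega
  rw [mul_comm m F] at hS
  omega

theorem pda_max_row_count (F m r S d K : ℕ) (hF : 7 ≤ F) (hm : 1 ≤ m)
    (hr : 3 ≤ r) (hr' : r ≤ F - 3) (hS : S = m * F + r) (hd : d = Nat.gcd F S)
    (P : Fin F → Fin K → Option (Fin S)) (hP : IsPDA K F (F - 2) S P)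
    (hmax : ∀ K', PDAExists K' F (F - 2) S → K' ≤ K) :
    (∀ i : Fin F,
        (Finset.univ.filter (fun j : Fin K => P i j ≠ none)).card ≤ S - (m + 1)) ∧
      F - r + d ≤ (Finset.univ.filter (fun i : Fin F =>
        (Finset.univ.filter (fun j : Fin K => P i j ≠ none)).card = S - (m + 1))).card :=
  pda_max_row_count_general F m r S d K hr hr' hS hd P hP hmax
end
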